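/- Let μ be a Borel probability measure on ℝ^d and Λ a countable subset of ℝ^d. If there is M > 0 with Σ_{λ'∈Λ} |μ^(λ−λ')| ≤ M for all λ ∈ Λ, then {e_λ : λ∈Λ} is a Bessel sequence in L²(μ) with bound M. -/

import Mathlib

open MeasureTheory Complex Finset Matrix
open scoped ENNReal NNReal

noncomputable def tauMap {d : ℕ} (Rr : Matrix (Fin d) (Fin d) ℝ) (b : Fin d → ℤ)
    (x : Fin d → ℝ) : Fin d → ℝ :=
  Rr⁻¹.mulVec (x + fun i => (b i : ℝ))

noncomputable def measOp {d : ℕ} (Rr : Matrix (Fin d) (Fin d) ℝ) (B : Finset (Fin d → ℤ))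
    (μ : Measure (Fin d → ℝ)) : Measure (Fin d → ℝ) :=
  (B.card : ℝ≥0∞)⁻¹ • ∑ b ∈ B, Measure.map (tauMap Rr b) μ

noncomputable def fourierTf {d : ℕ} (μ : Measure (Fin d → ℝ)) (x : Fin d → ℝ) : ℂ :=
  ∫ t, Complex.exp (2 * Real.pi * Complex.I * ((∑ i, x i * t i : ℝ) : ℂ)) ∂μ

noncomputable def expFn {d : ℕ} (l : Fin d → ℝ) (x : Fin d → ℝ) : ℂ :=
  Complex.exp (2 * Real.pi * Complex.I * ((∑ i, l i * x i : ℝ) : ℂ))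

/-- `Λ` is a spectrum for `μ`: the exponentials `e_λ`, `λ ∈ Λ`, form an orthonormal
basis of `L²(μ)`, expressed as orthonormality together with completeness. -/
def IsSpectral {d : ℕ} (μ : Measure (Fin d → ℝ)) (Λ : Set (Fin d → ℝ)) : Prop :=
  (∀ l1 ∈ Λ, ∀ l2 ∈ Λ, l1 ≠ l2 →
      ∫ x, expFn l1 x * (starRingEnd ℂ) (expFn l2 x) ∂μ = 0) ∧
  (∀ f : (Fin d → ℝ) → ℂ, MemLp f 2 μ →
      (∀ l ∈ Λ, ∫ x, f x * (starRingEnd ℂ) (expFn l x) ∂μ = 0) → f =ᵐ[μ] 0)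

noncomputable def hadamardMatrix {d : ℕ} (R : Matrix (Fin d) (Fin d) ℤ)
    (B L : Finset (Fin d → ℤ)) : Matrix {b // b ∈ B} {l // l ∈ L} ℂ :=
  fun b l => (Real.sqrt B.card : ℂ)⁻¹ * Complex.exp (2 * Real.pi * Complex.I *
    ((∑ i, ((R.map ((↑) : ℤ → ℝ))⁻¹.mulVec (fun j => ((b : Fin d → ℤ) j : ℝ))) i *
      ((l : Fin d → ℤ) i : ℝ) : ℝ) : ℂ))

def IsHadamardPair {d : ℕ} (R : Matrix (Fin d) (Fin d) ℤ)
    (B L : Finset (Fin d → ℤ)) : Prop :=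
  (hadamardMatrix R B L)ᴴ * hadamardMatrix R B L = 1 ∧
  hadamardMatrix R B L * (hadamardMatrix R B L)ᴴ = 1

def PiSet {d : ℕ} (B : Finset (Fin d → ℤ)) : Set (Fin d → ℝ) :=
  {γ | ∀ b ∈ B, ∃ m : ℤ, (∑ i, γ i * (b i : ℝ)) = (m : ℝ)}

/-- `SΛ = ∪_{l∈L} (R^T Λ + l)`. -/
def specOp {d : ℕ} (R : Matrix (Fin d) (Fin d) ℤ) (L : Finset (Fin d → ℤ))
    (Λ : Set (Fin d → ℝ)) : Set (Fin d → ℝ) :=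
  ⋃ l ∈ L, (fun γ => ((R.map ((↑) : ℤ → ℝ))ᵀ).mulVec γ + fun i => (l i : ℝ)) '' Λ

/-- `{e_λ : λ ∈ Λ}` is a Bessel sequence in `L²(μ)` with bound `M`. -/
def BesselBound {d : ℕ} (μ : Measure (Fin d → ℝ)) (Λ : Set (Fin d → ℝ)) (M : ℝ) : Prop :=
  ∀ f : (Fin d → ℝ) → ℂ, MemLp f 2 μ →
    ∑' l : Λ, (‖∫ x, f x * (starRingEnd ℂ) (expFn l x) ∂μ‖₊ : ℝ≥0∞) ^ 2 ≤
      ENNReal.ofReal M * ∫⁻ x, (‖f x‖₊ : ℝ≥0∞) ^ 2 ∂μ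

/-! For a finite set `s ⊆ Λ`, put `c λ = ⟨e_λ, f⟩` and `g = Σ_{λ ∈ s} c λ e_λ`. Then
`S = Σ |c λ|² = ⟨g, f⟩ ≤ ‖g‖ ‖f‖`, and `‖g‖² = Σ conj (c λ) c λ' ⟨e_λ, e_λ'⟩` is at most `M S` by
Schur's test: `2 |c λ| |c λ'| ≤ |c λ|² + |c λ'|²`, and the Gram matrix `⟨e_λ, e_λ'⟩ = μ^(λ' - λ)`
has absolute row sums at most `M`. Hence `S² ≤ M S ‖f‖²`. -/

open scoped InnerProductSpace ComplexConjugate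

section SchurTest

variable {ι : Type*}

theorem Finset.sum_sum_mul_mul_le_of_row_sum_le (s : Finset ι) (a : ι → ℝ) {K : ι → ι → ℝ}
    {C : ℝ} (hK : ∀ i j, 0 ≤ K i j) (hsymm : ∀ i j, K i j = K j i)
    (hrow : ∀ i ∈ s, ∑ j ∈ s, K i j ≤ C) :
    ∑ i ∈ s, ∑ j ∈ s, a i * a j * K i j ≤ C * ∑ i ∈ s, a i ^ 2 := by
  have hamgm : ∀ i j, 2 * (a i * a j * K i j) ≤ a i ^ 2 * K i j + a j ^ 2 * K j i := by
    intro i j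
    rw [← hsymm i j, ← add_mul, ← mul_assoc]
    exact mul_le_mul_of_nonneg_right (by nlinarith [sq_nonneg (a i - a j)]) (hK i j)
  have hrow' : ∑ i ∈ s, ∑ j ∈ s, a i ^ 2 * K i j ≤ C * ∑ i ∈ s, a i ^ 2 := by
    rw [Finset.mul_sum]
    refine Finset.sum_le_sum fun i hi => ?_
    rw [← Finset.mul_sum, mul_comm]
    exact mul_le_mul_of_nonneg_right (hrow i hi) (sq_nonneg _)
  calc ∑ i ∈ s, ∑ j ∈ s, a i * a j * K i j
      ≤ (∑ i ∈ s, ∑ j ∈ s, (a i ^ 2 * K i j + a j ^ 2 * K j i)) / 2 := by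
        rw [le_div_iff₀ two_pos, mul_comm, Finset.mul_sum]
        refine Finset.sum_le_sum fun i _ => ?_
        rw [Finset.mul_sum]
        exact Finset.sum_le_sum fun j _ => hamgm i j
    _ = ∑ i ∈ s, ∑ j ∈ s, a i ^ 2 * K i j := by
        simp only [Finset.sum_add_distrib]
        rw [Finset.sum_comm (f := fun i j => a j ^ 2 * K j i)]
        ring
    _ ≤ C * ∑ i ∈ s, a i ^ 2 := hrow'

variable {𝕜 E : Type*} [RCLike 𝕜] [NormedAddCommGroup E] [InnerProductSpace 𝕜 E]

theorem norm_sum_smul_sq_le_of_row_sum_le (v : ι → E) (s : Finset ι) (c : ι → 𝕜) {C : ℝ}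
    (hrow : ∀ i ∈ s, ∑ j ∈ s, ‖⟪v i, v j⟫_𝕜‖ ≤ C) :
    ‖∑ i ∈ s, c i • v i‖ ^ 2 ≤ C * ∑ i ∈ s, ‖c i‖ ^ 2 := by
  calc ‖∑ i ∈ s, c i • v i‖ ^ 2
      = RCLike.re (∑ i ∈ s, ∑ j ∈ s, conj (c i) * c j * ⟪v i, v j⟫_𝕜) := by
        rw [← inner_self_eq_norm_sq (𝕜 := 𝕜), sum_inner]
        simp only [inner_smul_left, inner_sum, inner_smul_right, mul_assoc, mul_left_comm]
    _ ≤ ∑ i ∈ s, ∑ j ∈ s, ‖c i‖ * ‖c j‖ * ‖⟪v i, v j⟫_𝕜‖ := by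
        refine (RCLike.re_le_norm _).trans ((norm_sum_le _ _).trans ?_)
        refine Finset.sum_le_sum fun i _ => (norm_sum_le _ _).trans_eq ?_
        simp only [norm_mul, RCLike.norm_conj]
    _ ≤ C * ∑ i ∈ s, ‖c i‖ ^ 2 :=
        s.sum_sum_mul_mul_le_of_row_sum_le _ (fun _ _ => norm_nonneg _)
          (fun i j => norm_inner_symm (v i) (v j)) hrow

theorem sum_norm_inner_sq_le_of_row_sum_le (v : ι → E) (s : Finset ι) {C : ℝ} (hC : 0 ≤ C)
    (hrow : ∀ i ∈ s, ∑ j ∈ s, ‖⟪v i, v j⟫_𝕜‖ ≤ C) (x : E) :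
    ∑ i ∈ s, ‖⟪v i, x⟫_𝕜‖ ^ 2 ≤ C * ‖x‖ ^ 2 := by
  set S := ∑ i ∈ s, ‖⟪v i, x⟫_𝕜‖ ^ 2
  set g := ∑ i ∈ s, ⟪v i, x⟫_𝕜 • v i
  have hS : 0 ≤ S := by positivity
  have hgx : ⟪g, x⟫_𝕜 = S := by
    simp only [g, S, sum_inner, inner_smul_left, RCLike.conj_mul, RCLike.ofReal_sum,
      RCLike.ofReal_pow]
  have hSg : S ≤ ‖g‖ * ‖x‖ := by
    simpa [hgx, abs_of_nonneg hS] using norm_inner_le_norm (𝕜 := 𝕜) g x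
  have hg : ‖g‖ ^ 2 ≤ C * S := norm_sum_smul_sq_le_of_row_sum_le v s _ hrow
  have hSS : S * S ≤ S * (C * ‖x‖ ^ 2) := calc
    S * S ≤ ‖g‖ ^ 2 * ‖x‖ ^ 2 := by nlinarith
    _ ≤ C * S * ‖x‖ ^ 2 := by gcongr
    _ = S * (C * ‖x‖ ^ 2) := by ring
  rcases hS.eq_or_lt with hS0 | hSpos
  · rw [← hS0]; positivity
  · exact le_of_mul_le_mul_left hSS hSpos

theorem tsum_enorm_inner_sq_le_of_row_tsum_le (v : ι → E) {C : ℝ≥0}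
    (hrow : ∀ i, ∑' j, ‖⟪v i, v j⟫_𝕜‖ₑ ≤ C) (x : E) :
    ∑' i, ‖⟪v i, x⟫_𝕜‖ₑ ^ 2 ≤ C * ‖x‖ₑ ^ 2 := by
  rw [ENNReal.tsum_eq_iSup_sum]
  refine iSup_le fun s => ?_
  have hrow_s : ∀ i ∈ s, ∑ j ∈ s, ‖⟪v i, v j⟫_𝕜‖ ≤ C := by
    intro i _
    have hsum := (ENNReal.sum_le_tsum s).trans (hrow i)
    simp only [enorm_eq_nnnorm, ← ENNReal.ofNNReal_finsetSum, ENNReal.coe_le_coe,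
      ← NNReal.coe_le_coe] at hsum
    simpa using hsum
  have hfinite := sum_norm_inner_sq_le_of_row_sum_le v s C.coe_nonneg hrow_s x
  simp only [enorm_eq_nnnorm, ← ENNReal.coe_pow, ← ENNReal.ofNNReal_finsetSum, ← ENNReal.coe_mul,
    ENNReal.coe_le_coe, ← NNReal.coe_le_coe]
  simpa using hfinite

end SchurTest

section L2

variable {α 𝕜 : Type*} [RCLike 𝕜] [MeasurableSpace α] {μ : Measure α}

theorem MeasureTheory.MemLp.inner_toLp_toLp {f g : α → 𝕜} (hf : MemLp f 2 μ)
    (hg : MemLp g 2 μ) : ⟪hf.toLp f, hg.toLp g⟫_𝕜 = ∫ x, g x * conj (f x) ∂μ := by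
  rw [L2.inner_def]
  refine integral_congr_ae ?_
  filter_upwards [hf.coeFn_toLp, hg.coeFn_toLp] with x hfx hgx
  rw [hfx, hgx, RCLike.inner_apply]

theorem MeasureTheory.MemLp.enorm_toLp_sq {E : Type*} [NormedAddCommGroup E] {f : α → E}
    (hf : MemLp f 2 μ) : ‖hf.toLp f‖ₑ ^ 2 = ∫⁻ x, ‖f x‖ₑ ^ 2 ∂μ := by
  have h := eLpNorm_nnreal_pow_eq_lintegral (μ := μ) (f := f) (p := 2) two_ne_zero
  simp only [NNReal.coe_ofNat, ENNReal.rpow_ofNat, ENNReal.coe_ofNat] at h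
  rw [Lp.enorm_toLp, h]

end L2

section Exponentials

variable {d : ℕ}

theorem continuous_expFn (l : Fin d → ℝ) : Continuous (expFn l) := by
  unfold expFn; fun_prop

theorem norm_expFn (l x : Fin d → ℝ) : ‖expFn l x‖ = 1 := by
  simp [expFn, Complex.norm_exp]

theorem expFn_mul_conj (l l' x : Fin d → ℝ) :
    expFn l x * conj (expFn l' x) = expFn (l - l') x := by
  simp only [expFn, ← Complex.exp_conj, ← Complex.exp_add, Pi.sub_apply, sub_mul,
    Finset.sum_sub_distrib, map_mul, map_ofNat, Complex.conj_ofReal, Complex.conj_I]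
  push_cast
  ring_nf

theorem memLp_expFn (μ : Measure (Fin d → ℝ)) [IsFiniteMeasure μ] (l : Fin d → ℝ)
    (p : ℝ≥0∞) : MemLp (expFn l) p μ :=
  MemLp.of_bound (continuous_expFn l).aestronglyMeasurable 1
    (Filter.Eventually.of_forall fun x => (norm_expFn l x).le)

theorem integral_expFn (μ : Measure (Fin d → ℝ)) (l : Fin d → ℝ) :
    ∫ x, expFn l x ∂μ = fourierTf μ l :=
  rfl

end Exponentials

theorem bessel_of_schur_general {d : ℕ} (μ : Measure (Fin d → ℝ)) [IsProbabilityMeasure μ]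
    (Λ : Set (Fin d → ℝ)) (M : ℝ)
    (hSchur : ∀ l ∈ Λ,
      (∑' l' : Λ, (‖fourierTf μ (l - (l' : Fin d → ℝ))‖₊ : ℝ≥0∞)) ≤ ENNReal.ofReal M) :
    BesselBound μ Λ M := by
  intro f hf
  let e : Λ → Lp ℂ 2 μ := fun l => (memLp_expFn μ l 2).toLp (expFn l)
  have hgram : ∀ l l' : Λ, ⟪e l', e l⟫_ℂ = fourierTf μ (l - l') := fun l l' => by
    simp only [e, MemLp.inner_toLp_toLp, expFn_mul_conj, integral_expFn]
  have hrow : ∀ l, ∑' l', ‖⟪e l, e l'⟫_ℂ‖ₑ ≤ M.toNNReal := fun l =>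
    (tsum_congr fun l' => by
      rw [← inner_conj_symm, RCLike.enorm_conj, hgram, enorm_eq_nnnorm]).trans_le (hSchur l l.2)
  have hcoef : ∀ l : Λ, ⟪e l, hf.toLp f⟫_ℂ = ∫ x, f x * conj (expFn l x) ∂μ :=
    fun l => MemLp.inner_toLp_toLp _ _
  have hbessel := tsum_enorm_inner_sq_le_of_row_tsum_le e hrow (hf.toLp f)
  rw [hf.enorm_toLp_sq] at hbessel
  simp only [hcoef, enorm_eq_nnnorm] at hbessel
  exact hbessel

theorem bessel_of_schur {d : ℕ} (μ : Measure (Fin d → ℝ)) [IsProbabilityMeasure μ]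
    (Λ : Set (Fin d → ℝ)) (hΛc : Λ.Countable) (M : ℝ) (hM : 0 < M)
    (hSchur : ∀ l ∈ Λ,
      (∑' l' : Λ, (‖fourierTf μ (l - (l' : Fin d → ℝ))‖₊ : ℝ≥0∞)) ≤ ENNReal.ofReal M) :
    BesselBound μ Λ M :=
  bessel_of_schur_general μ Λ M hSchur
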